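/- Fenchel conjugate of a supremum: Let E be a real topological vector space, x₀* ∈ E*, Λ a nonempty set, and {f_λ}_{λ∈Λ} a family of real-valued functions on E such that {f_λ − x₀*}_{λ∈Λ} is infsup-convex on E and λ ↦ f_λ(x) is bounded for every x ∈ E. Then (sup_{λ∈Λ} f_λ)*(x₀*) = min over L ∈ Δ_Λ of (L({f_λ(·)}_{λ∈Λ}))*(x₀*), the minimum being attained. -/

import Mathlib

open scoped ENNReal

noncomputable def lpinfOne (Λ : Type*) : lp (fun _ : Λ => ℝ) ∞ :=
  ⟨fun _ => (1 : ℝ), memℓp_infty ⟨1, by rintro x ⟨l, rfl⟩; simp⟩⟩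

def InfSupConvex {Λ X : Type*} (f : Λ → X → ℝ) : Prop :=
  ∀ m : ℕ, 0 < m → ∀ t : Fin m → ℝ, (∀ j, 0 ≤ t j) → (∑ j, t j) = 1 →
    ∀ x : Fin m → X,
      ⨅ x' : X, ⨆ l, (f l x' : EReal) ≤ ⨆ l, ((∑ j, t j * f l (x j) : ℝ) : EReal)

noncomputable def fenchel {E : Type*} [AddCommGroup E] [Module ℝ E] [TopologicalSpace E]
    (g : E → ℝ) (p : E →L[ℝ] ℝ) : EReal :=
  ⨆ x : E, ((p x - g x : ℝ) : EReal)

/-!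
Every mean `L` on `ℓ^∞(Λ)` satisfies `L Φ ≤ sup_λ Φ λ`, so `(sup_λ f_λ)^* ≤ (L ∘ F)^*`. For the
converse at a finite value `c` of `(sup_λ f_λ)^*(x₀)` we need a mean with `x₀ x - c ≤ L (F x)` for
all `x`. The Mazur–Orlicz theorem for the sublinear functional `Φ ↦ sup_λ Φ λ` produces a linear
`L` dominated by it (hence a mean) with this property, provided
`∑ₓ σₓ (x₀ x - c) ≤ sup_λ ∑ₓ σₓ f_λ x` for all finitely supported probability weights `σ`; and
this is exactly what infsup-convexity of `{f_λ - x₀}` gives, since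
`inf_x sup_λ (f_λ x - x₀ x) ≥ -c`.
-/

open scoped lp
open Set Finsupp

section MazurOrlicz

variable {V W : Type*} [AddCommGroup V] [Module ℝ V] [AddCommGroup W] [Module ℝ W]
  {p : V → ℝ}

lemma map_zero_of_smul_eq_mul (hp_smul : ∀ r : ℝ, 0 < r → ∀ x, p (r • x) = r * p x) :
    p 0 = 0 := by
  have h2 := hp_smul 2 two_pos 0
  rw [smul_zero] at h2
  linarith

variable (p) in
/-- A sublinear minorant of `p` with `q (-S w) ≤ -B w` on `C`; Hahn–Banach below it yields
the Mazur–Orlicz theorem. -/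
noncomputable def mazurOrliczGauge (C : PointedCone ℝ W) (S : W →ₗ[ℝ] V) (B : W →ₗ[ℝ] ℝ)
    (x : V) : ℝ :=
  ⨅ w : C, p (x + S w) - B w

variable {C : PointedCone ℝ W} {S : W →ₗ[ℝ] V} {B : W →ₗ[ℝ] ℝ}

lemma mazurOrliczGauge_smul (hp_smul : ∀ r : ℝ, 0 < r → ∀ x, p (r • x) = r * p x)
    {r : ℝ} (hr : 0 < r) (x : V) :
    mazurOrliczGauge p C S B (r • x) = r * mazurOrliczGauge p C S B x := by
  have hsurj : Function.Surjective fun w : C => (⟨r • w, C.smul_mem hr.le w.2⟩ : C) :=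
    fun w => ⟨⟨r⁻¹ • w, C.smul_mem (inv_nonneg.2 hr.le) w.2⟩,
      Subtype.ext (smul_inv_smul₀ hr.ne' _)⟩
  simp only [mazurOrliczGauge]
  rw [Real.mul_iInf_of_nonneg hr.le, ← hsurj.iInf_comp]
  refine iInf_congr fun w => ?_
  simp only [map_smul, ← smul_add, hp_smul r hr, smul_eq_mul]
  ring

lemma bddBelow_mazurOrliczGauge (hp_add : ∀ x y, p (x + y) ≤ p x + p y)
    (hC : ∀ w ∈ C, B w ≤ p (S w)) (x : V) :
    BddBelow (range fun w : C => p (x + S w) - B w) := by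
  refine ⟨-p (-x), ?_⟩
  rintro _ ⟨w, rfl⟩
  have := hp_add (x + S w) (-x)
  rw [add_neg_cancel_comm] at this
  linarith [hC w w.2]

lemma mazurOrliczGauge_le (hp_add : ∀ x y, p (x + y) ≤ p x + p y)
    (hC : ∀ w ∈ C, B w ≤ p (S w)) (x : V) {w : W} (hw : w ∈ C) :
    mazurOrliczGauge p C S B x ≤ p (x + S w) - B w :=
  ciInf_le (bddBelow_mazurOrliczGauge hp_add hC x) ⟨w, hw⟩

lemma mazurOrliczGauge_add_le (hp_add : ∀ x y, p (x + y) ≤ p x + p y)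
    (hC : ∀ w ∈ C, B w ≤ p (S w)) (x y : V) :
    mazurOrliczGauge p C S B (x + y) ≤ mazurOrliczGauge p C S B x + mazurOrliczGauge p C S B y :=
  le_ciInf_add_ciInf fun v w => by
    have := mazurOrliczGauge_le hp_add hC (x + y) (C.add_mem v.2 w.2)
    rw [map_add, map_add, add_add_add_comm] at this
    linarith [hp_add (x + S v) (y + S w)]

/-- The Mazur–Orlicz theorem. -/
theorem exists_linearMap_le_sublinear_of_le_on_cone (hp_add : ∀ x y, p (x + y) ≤ p x + p y)
    (hC : ∀ w ∈ C, B w ≤ p (S w)) (hp_smul : ∀ r : ℝ, 0 < r → ∀ x, p (r • x) = r * p x) :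
    ∃ L : V →ₗ[ℝ] ℝ, (∀ x, L x ≤ p x) ∧ ∀ w ∈ C, B w ≤ L (S w) := by
  have hp0 := map_zero_of_smul_eq_mul hp_smul
  obtain ⟨L, -, hL⟩ := exists_extension_of_le_sublinear (⟨⊥, 0⟩ : V →ₗ.[ℝ] ℝ)
    (mazurOrliczGauge p C S B) (fun r hr => mazurOrliczGauge_smul hp_smul hr)
    (mazurOrliczGauge_add_le hp_add hC) fun x => by
      rw [(Submodule.mem_bot ℝ).1 x.2]
      exact le_ciInf fun w => by simpa using hC w w.2
  refine ⟨L, fun x => ?_, fun w hw => ?_⟩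
  · simpa [hp0] using (hL x).trans (mazurOrliczGauge_le hp_add hC x C.zero_mem)
  · have := (hL (-S w)).trans (mazurOrliczGauge_le hp_add hC (-S w) hw)
    rw [map_neg, neg_add_cancel, hp0] at this
    linarith

end MazurOrlicz

lemma Finsupp.le_of_le_of_degree_eq_one {ι V : Type*} [AddCommGroup V] [Module ℝ V]
    {p : V → ℝ} (hp_smul : ∀ r : ℝ, 0 < r → ∀ x, p (r • x) = r * p x)
    {S : (ι →₀ ℝ) →ₗ[ℝ] V} {B : (ι →₀ ℝ) →ₗ[ℝ] ℝ}
    (h : ∀ σ : ι →₀ ℝ, 0 ≤ σ → σ.degree = 1 → B σ ≤ p (S σ)) {σ : ι →₀ ℝ} (hσ : 0 ≤ σ) :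
    B σ ≤ p (S σ) := by
  obtain rfl | hne := eq_or_ne σ 0
  · simp [map_zero_of_smul_eq_mul hp_smul]
  have hT : 0 < σ.degree := by
    rw [degree_apply]
    exact Finset.sum_pos (fun x hx => (hσ x).lt_of_ne' (mem_support_iff.1 hx))
      (support_nonempty_iff.2 hne)
  have hτ : 0 ≤ (σ.degree)⁻¹ • σ := smul_nonneg (inv_nonneg.2 hT.le) hσ
  have hτ1 : ((σ.degree)⁻¹ • σ).degree = 1 := by
    rw [degree_apply, support_smul_eq (inv_ne_zero hT.ne')]
    simp only [smul_apply, smul_eq_mul, ← Finset.mul_sum]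
    rw [← degree_apply, inv_mul_cancel₀ hT.ne']
  have := h _ hτ hτ1
  rw [map_smul, map_smul, hp_smul _ (inv_pos.2 hT), smul_eq_mul] at this
  exact (mul_le_mul_iff_of_pos_left (inv_pos.2 hT)).1 this

lemma EReal.coe_ciSup {ι : Sort*} [Nonempty ι] {g : ι → ℝ} (hg : BddAbove (range g)) :
    ((⨆ i, g i : ℝ) : EReal) = ⨆ i, (g i : EReal) :=
  EReal.coe_strictMono.monotone.map_ciSup_of_continuousAt
    continuous_coe_real_ereal.continuousAt hg

section LInfty

variable {Λ : Type*}

lemma lpinfOne_apply (l : Λ) : lpinfOne Λ l = 1 := rfl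

lemma lp.bddAbove_range_infty (Φ : ℓ^∞(Λ, ℝ)) : BddAbove (range Φ) :=
  ⟨‖Φ‖, by
    rintro _ ⟨l, rfl⟩
    exact (le_abs_self _).trans (lp.norm_apply_le_norm ENNReal.top_ne_zero Φ l)⟩

lemma lp.apply_le_ciSup (Φ : ℓ^∞(Λ, ℝ)) (l : Λ) : Φ l ≤ ⨆ l, Φ l :=
  le_ciSup (lp.bddAbove_range_infty Φ) l

lemma lp.ciSup_add_le [Nonempty Λ] (Φ Ψ : ℓ^∞(Λ, ℝ)) :
    ⨆ l, (Φ + Ψ) l ≤ (⨆ l, Φ l) + ⨆ l, Ψ l :=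
  ciSup_le fun l => add_le_add (lp.apply_le_ciSup Φ l) (lp.apply_le_ciSup Ψ l)

lemma lp.ciSup_smul {r : ℝ} (hr : 0 ≤ r) (Φ : ℓ^∞(Λ, ℝ)) :
    ⨆ l, (r • Φ) l = r * ⨆ l, Φ l :=
  (Real.mul_iSup_of_nonneg hr _).symm

variable {L : ℓ^∞(Λ, ℝ) →ₗ[ℝ] ℝ}

lemma apply_le_ciSup_of_nonneg (hpos : ∀ Φ : ℓ^∞(Λ, ℝ), (∀ l, 0 ≤ Φ l) → 0 ≤ L Φ)
    (hone : L (lpinfOne Λ) = 1) (Φ : ℓ^∞(Λ, ℝ)) : L Φ ≤ ⨆ l, Φ l := by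
  have := hpos ((⨆ l, Φ l) • lpinfOne Λ - Φ) fun l => by
    simpa only [lp.coeFn_sub, lp.coeFn_smul, Pi.sub_apply, Pi.smul_apply, lpinfOne_apply,
      smul_eq_mul, mul_one, sub_nonneg] using lp.apply_le_ciSup Φ l
  rwa [map_sub, map_smul, hone, smul_eq_mul, mul_one, sub_nonneg] at this

variable [Nonempty Λ]

lemma nonneg_of_le_ciSup (hL : ∀ Φ, L Φ ≤ ⨆ l, Φ l) (Φ : ℓ^∞(Λ, ℝ)) (hΦ : ∀ l, 0 ≤ Φ l) :
    0 ≤ L Φ := by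
  have : L (-Φ) ≤ 0 := (hL _).trans (ciSup_le fun l => by simpa using hΦ l)
  rwa [map_neg, neg_nonpos] at this

lemma apply_lpinfOne_of_le_ciSup (hL : ∀ Φ, L Φ ≤ ⨆ l, Φ l) : L (lpinfOne Λ) = 1 := by
  have h₁ := hL (lpinfOne Λ)
  have h₂ := hL (-lpinfOne Λ)
  simp only [lpinfOne_apply, lp.coeFn_neg, Pi.neg_apply, ciSup_const, map_neg] at h₁ h₂
  linarith

end LInfty

lemma InfSupConvex.le_iSup_linearCombination {Λ X : Type*} {g : Λ → X → ℝ}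
    (hg : InfSupConvex g) {σ : X →₀ ℝ} (hσ : 0 ≤ σ) (hσ1 : σ.degree = 1) :
    ⨅ x, ⨆ l, (g l x : EReal) ≤ ⨆ l, ((linearCombination ℝ (g l) σ : ℝ) : EReal) := by
  have hne : σ.support.Nonempty := support_nonempty_iff.2 (by rintro rfl; simp at hσ1)
  let e := σ.support.equivFin.symm
  have hsum (φ : X → ℝ) : ∑ j, φ (e j) = ∑ x ∈ σ.support, φ x :=
    (e.sum_comp (φ ∘ (↑))).trans (σ.support.sum_coe_sort φ)
  have := hg _ (Finset.card_pos.2 hne) (fun j => σ (e j)) (fun j => hσ _)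
    (by rw [hsum, ← degree_apply, hσ1]) (fun j => e j)
  refine this.trans_eq (iSup_congr fun l => ?_)
  rw [linearCombination_apply, Finsupp.sum, ← hsum]
  rfl

section Conjugate

variable {Λ E : Type*} [Nonempty Λ] {F : E → ℓ^∞(Λ, ℝ)} {x₀ : E → ℝ} {c : ℝ}

lemma linearCombination_sub_le_ciSup (hconv : InfSupConvex fun l x => F x l - x₀ x)
    (hc : ∀ x, x₀ x - ⨆ l, F x l ≤ c) {σ : E →₀ ℝ} (hσ : 0 ≤ σ) (hσ1 : σ.degree = 1) :
    linearCombination ℝ (fun x => x₀ x - c) σ ≤ ⨆ l, linearCombination ℝ F σ l := by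
  have hcoord (l : Λ) : linearCombination ℝ F σ l = linearCombination ℝ (fun x => F x l) σ :=
    apply_linearCombination ℝ (lp.evalₗ _ ∞ l) F σ
  have hlower : ((-c : ℝ) : EReal) ≤ ⨅ x, ⨆ l, ((F x l - x₀ x : ℝ) : EReal) :=
    le_iInf fun x => by
      have hbdd := lp.bddAbove_range_infty (F x)
      rw [← EReal.coe_ciSup (hbdd.range_comp_left fun _ _ h => sub_le_sub_right h _),
        ← ciSup_sub hbdd, EReal.coe_le_coe_iff]
      linarith [hc x]
  have hupper : ⨆ l, ((linearCombination ℝ (fun x => F x l - x₀ x) σ : ℝ) : EReal) ≤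
      (((⨆ l, linearCombination ℝ F σ l) - linearCombination ℝ x₀ σ : ℝ) : EReal) :=
    iSup_le fun l => EReal.coe_le_coe_iff.2 <| by
      have := (hcoord l).symm.trans_le (lp.apply_le_ciSup _ l)
      simp only [linearCombination_apply, Finsupp.sum, smul_eq_mul, mul_sub,
        Finset.sum_sub_distrib] at this ⊢
      linarith
  have hmass : linearCombination ℝ (fun x => x₀ x - c) σ = linearCombination ℝ x₀ σ - c := by
    simp only [linearCombination_apply, Finsupp.sum, smul_eq_mul, mul_sub, Finset.sum_sub_distrib,
      ← Finset.sum_mul, ← degree_apply, hσ1, one_mul]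
  have := EReal.coe_le_coe_iff.1
    (hlower.trans ((hconv.le_iSup_linearCombination hσ hσ1).trans hupper))
  linarith

lemma exists_le_ciSup_and_sub_le (hconv : InfSupConvex fun l x => F x l - x₀ x)
    (hc : ∀ x, x₀ x - ⨆ l, F x l ≤ c) :
    ∃ L : ℓ^∞(Λ, ℝ) →ₗ[ℝ] ℝ, (∀ Φ, L Φ ≤ ⨆ l, Φ l) ∧ ∀ x, x₀ x - c ≤ L (F x) := by
  have hp_smul (r : ℝ) (hr : 0 < r) (Φ : ℓ^∞(Λ, ℝ)) : ⨆ l, (r • Φ) l = r * ⨆ l, Φ l :=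
    lp.ciSup_smul hr.le Φ
  obtain ⟨L, hLp, hLC⟩ := exists_linearMap_le_sublinear_of_le_on_cone lp.ciSup_add_le
    (p := fun Φ : ℓ^∞(Λ, ℝ) => ⨆ l, Φ l) (C := PointedCone.positive ℝ (E →₀ ℝ))
    (S := linearCombination ℝ F) (B := linearCombination ℝ fun x => x₀ x - c)
    (fun σ hσ => le_of_le_of_degree_eq_one (p := fun Φ : ℓ^∞(Λ, ℝ) => ⨆ l, Φ l) hp_smul
      (fun τ hτ hτ1 => linearCombination_sub_le_ciSup hconv hc hτ hτ1) hσ)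
    hp_smul
  refine ⟨L, hLp, fun x => ?_⟩
  simpa using hLC (single x 1) (single_nonneg.2 zero_le_one)

end Conjugate

section Fenchel

variable {E : Type*} [AddCommGroup E] [Module ℝ E] [TopologicalSpace E] {g h : E → ℝ}
  {p : E →L[ℝ] ℝ}

lemma fenchel_anti (hgh : ∀ x, g x ≤ h x) : fenchel h p ≤ fenchel g p :=
  iSup_mono fun x => EReal.coe_le_coe_iff.2 (by linarith [hgh x])

lemma sub_le_toReal_fenchel (hg : fenchel g p ≠ ⊤) (x : E) : p x - g x ≤ (fenchel g p).toReal :=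
  EReal.coe_le_coe_iff.1 ((le_iSup (fun x => ((p x - g x : ℝ) : EReal)) x).trans
    (EReal.le_coe_toReal hg))

lemma fenchel_le_of_sub_toReal_le (hg : fenchel g p ≠ ⊤)
    (hgh : ∀ x, p x - (fenchel g p).toReal ≤ h x) : fenchel h p ≤ fenchel g p :=
  iSup_le fun x => by
    have hbot : fenchel g p ≠ ⊥ :=
      ne_bot_of_le_ne_bot (EReal.coe_ne_bot _) (le_iSup (fun x => ((p x - g x : ℝ) : EReal)) x)
    rw [← EReal.coe_toReal hg hbot, EReal.coe_le_coe_iff]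
    linarith [hgh x]

end Fenchel

/-- Conjugate-of-supremum formula: if `{f_λ - x₀*}` is infsup-convex on `E` and the family
is pointwise bounded, then `(sup_λ f_λ)*(x₀*) = min_{L ∈ Δ_Λ} (L({f_λ(·)}))*(x₀*)`,
the minimum being attained. -/
theorem stmt14 (E Λ : Type*) [AddCommGroup E] [Module ℝ E] [TopologicalSpace E]
    [Nonempty Λ]
    (x₀ : E →L[ℝ] ℝ) (f : Λ → E → ℝ)
    (hconv : InfSupConvex (fun l x => f l x - x₀ x))
    (F : E → lp (fun _ : Λ => ℝ) ∞) (hF : ∀ x l, F x l = f l x) :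
    ∃ L : lp (fun _ : Λ => ℝ) ∞ →ₗ[ℝ] ℝ,
      (∀ Φ : lp (fun _ : Λ => ℝ) ∞, (∀ l, 0 ≤ Φ l) → 0 ≤ L Φ) ∧
      L (lpinfOne Λ) = 1 ∧
      fenchel (fun x => ⨆ l, f l x) x₀ = fenchel (fun x => L (F x)) x₀ ∧
      ∀ L' : lp (fun _ : Λ => ℝ) ∞ →ₗ[ℝ] ℝ,
        (∀ Φ : lp (fun _ : Λ => ℝ) ∞, (∀ l, 0 ≤ Φ l) → 0 ≤ L' Φ) →
        L' (lpinfOne Λ) = 1 →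
        fenchel (fun x => ⨆ l, f l x) x₀ ≤ fenchel (fun x => L' (F x)) x₀ := by
  obtain rfl : f = fun l x => F x l := funext₂ fun l x => (hF x l).symm
  have hmin (L' : ℓ^∞(Λ, ℝ) →ₗ[ℝ] ℝ) (hpos : ∀ Φ : ℓ^∞(Λ, ℝ), (∀ l, 0 ≤ Φ l) → 0 ≤ L' Φ)
      (hone : L' (lpinfOne Λ) = 1) :
      fenchel (fun x => ⨆ l, F x l) x₀ ≤ fenchel (fun x => L' (F x)) x₀ :=
    fenchel_anti fun x => apply_le_ciSup_of_nonneg hpos hone (F x)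
  obtain ⟨L, hLp, hL⟩ : ∃ L : ℓ^∞(Λ, ℝ) →ₗ[ℝ] ℝ, (∀ Φ, L Φ ≤ ⨆ l, Φ l) ∧
      fenchel (fun x => L (F x)) x₀ ≤ fenchel (fun x => ⨆ l, F x l) x₀ := by
    by_cases htop : fenchel (fun x => ⨆ l, F x l) x₀ = ⊤
    · obtain ⟨l₀⟩ := ‹Nonempty Λ›
      exact ⟨lp.evalₗ _ ∞ l₀, fun Φ => lp.apply_le_ciSup Φ l₀, htop ▸ le_top⟩
    · obtain ⟨L, hLp, hLF⟩ := exists_le_ciSup_and_sub_le hconv (sub_le_toReal_fenchel htop)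
      exact ⟨L, hLp, fenchel_le_of_sub_toReal_le htop hLF⟩
  have hpos := nonneg_of_le_ciSup hLp
  have hone := apply_lpinfOne_of_le_ciSup hLp
  exact ⟨L, hpos, hone, (hmin L hpos hone).antisymm hL, hmin⟩
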